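/- arXiv:1901.04409 — 3 statements merged into one kernel-verified Lean document; each statement's English description precedes it below -/
import Mathlib

section
/- The index-d baker's map with support Γ(α) on 𝔠ⁿ, which maps α.0₁.u ↦ α.0_d.u and α.1₁.u ↦ α.1_d.u for all u ∈ 𝔠ⁿ and fixes all points not in Γ(α), equals the product of transpositions ⟨α.0₁, β.0_d⟩ · ⟨α.1₁, β.1_d⟩ · ⟨α, β⟩ · (index-d baker's map with support Γ(β)) for any address β incomparable with α; equivalently, the composition A = ⟨α.0₁, β.0_d⟩ ∘ ⟨α.1₁, β.1_d⟩ ∘ ⟨α, β⟩ of transposition homeomorphisms equals B_d(α) ∘ B_d(β)⁻¹, the composite of the baker's map supported on Γ(α) with the inverse of the baker's map supported on Γ(β). -/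
open scoped Classical

/-- Finite words over the alphabet `{0,1}`. -/
abbrev Word := List Bool
/-- Cantor space: infinite `{0,1}`-sequences. -/
abbrev Cantor := ℕ → Bool

/-- Concatenate a finite word with an infinite sequence. -/
def catW (α : Word) (w : Cantor) : Cantor :=
  fun i => if h : i < α.length then α.get ⟨i, h⟩ else w (i - α.length)

/-- The basic open set of sequences having `α` as a prefix. -/
def GammaW (α : Word) : Set Cantor := Set.range (catW α)

/-- Incomparability of words: neither is a prefix of the other. -/
def IncompW (α β : Word) : Prop := ¬ α <+: β ∧ ¬ β <+: α

/-- Addresses: `n`-tuples of finite words. -/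
abbrev Addr (n : ℕ) := Fin n → Word
/-- `n`-dimensional Cantor space. -/
abbrev CantorN (n : ℕ) := Fin n → Cantor

/-- The basic open set in `𝔠ⁿ` indexed by the address `α`. -/
def GammaN {n : ℕ} (α : Addr n) : Set (CantorN n) :=
  { w | ∀ d, w d ∈ GammaW (α d) }

/-- Incomparability of addresses: some coordinate pair is incomparable. -/
def IncompA {n : ℕ} (α β : Addr n) : Prop := ∃ d, IncompW (α d) (β d)

/-- Drop the first `k` symbols of an infinite sequence. -/
def dropSeq (k : ℕ) (w : Cantor) : Cantor := fun i => w (i + k)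

/-- Prepend the address `α` coordinatewise. -/
def catA {n : ℕ} (α : Addr n) (u : CantorN n) : CantorN n :=
  fun d => catW (α d) (u d)

/-- Remove the prefix `α` coordinatewise. -/
def dropA {n : ℕ} (α : Addr n) (w : CantorN n) : CantorN n :=
  fun d => dropSeq ((α d).length) (w d)

/-- The transposition `⟨α β⟩` of `𝔠ⁿ`: exchanges `Γ(α)` and `Γ(β)` by prefix
substitution and fixes all other points. -/
noncomputable def swapN {n : ℕ} (α β : Addr n) : CantorN n → CantorN n :=
  fun w =>
    if w ∈ GammaN α then catA β (dropA α w)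
    else if w ∈ GammaN β then catA α (dropA β w)
    else w

/-- Append the symbol `x` to the `d`-th coordinate of the address `α`. -/
def appA {n : ℕ} (α : Addr n) (d : Fin n) (x : Bool) : Addr n :=
  Function.update α d (α d ++ [x])

/-- Append the word `u` to the `d`-th coordinate of the address `α`. -/
def appW {n : ℕ} (α : Addr n) (d : Fin n) (u : Word) : Addr n :=
  Function.update α d (α d ++ u)

/-- Coordinatewise concatenation of addresses. -/
def concatA {n : ℕ} (α η : Addr n) : Addr n := fun d => α d ++ η d

/-- The address with word `u` in coordinate `d` and empty words elsewhere. -/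
def unitA {n : ℕ} (d : Fin n) (u : Word) : Addr n :=
  fun e => if e = d then u else []

/-- Prepend a letter to an infinite sequence. -/
def consSeq (b : Bool) (w : Cantor) : Cantor :=
  fun i => match i with
  | 0 => b
  | i + 1 => w i

/-- The full-support baker's map: moves the first letter of coordinate `1`
to the front of coordinate `d`. -/
def bakerFull {n : ℕ} [NeZero n] (d : Fin n) : CantorN n → CantorN n :=
  fun w e =>
    if e = 0 then dropSeq 1 (w 0)
    else if e = d then consSeq (w 0 0) (w d)
    else w e

/-- The inverse of the full-support baker's map: moves the first letter of
coordinate `d` to the front of coordinate `1`. -/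
def invBakerFull {n : ℕ} [NeZero n] (d : Fin n) : CantorN n → CantorN n :=
  fun w e =>
    if e = 0 then consSeq (w d 0) (w 0)
    else if e = d then dropSeq 1 (w d)
    else w e

/-- The index-`d` baker's map with support `Γ(α)`: sends `α.x₁.u ↦ α.x_d.u`
and fixes all points outside `Γ(α)`. -/
noncomputable def bakerN {n : ℕ} [NeZero n] (d : Fin n) (α : Addr n) :
    CantorN n → CantorN n :=
  fun w => if w ∈ GammaN α then catA α (bakerFull d (dropA α w)) else w

/-- The inverse of the index-`d` baker's map with support `Γ(α)`. -/
noncomputable def invBakerN {n : ℕ} [NeZero n] (d : Fin n) (α : Addr n) :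
    CantorN n → CantorN n :=
  fun w => if w ∈ GammaN α then catA α (invBakerFull d (dropA α w)) else w

/-- The partial prefix-substitution action of the symbol `⟨γ δ⟩` on addresses,
as a relation: `ActRel γ δ ζ ζ'` holds iff `ζ • ⟨γ δ⟩` is defined and
equals `ζ'`. -/
def ActRel {n : ℕ} (γ δ ζ ζ' : Addr n) : Prop :=
  (∃ η, ζ = concatA γ η ∧ ζ' = concatA δ η) ∨
  (∃ η, ζ = concatA δ η ∧ ζ' = concatA γ η) ∨
  (IncompA ζ γ ∧ IncompA ζ δ ∧ ζ' = ζ)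

/-! ### Auxiliary lemmas -/

lemma catW_eval_lt (a : Word) (w : Cantor) (i : ℕ) (h : i < a.length) :
    catW a w i = a.get ⟨i, h⟩ := dif_pos h

lemma catW_eval_ge (a : Word) (w : Cantor) (i : ℕ) (h : a.length ≤ i) :
    catW a w i = w (i - a.length) := dif_neg (by omega)

lemma dropSeq_catW (a : Word) (w : Cantor) : dropSeq a.length (catW a w) = w := by
  funext i
  show catW a w (i + a.length) = w i
  rw [catW_eval_ge _ _ _ (Nat.le_add_left _ _)]
  simp

lemma catW_head (a : Word) (w : Cantor) : catW a w a.length = w 0 := by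
  rw [catW_eval_ge _ _ _ le_rfl]; simp

lemma consSeq_head_tail (w : Cantor) : consSeq (w 0) (dropSeq 1 w) = w := by
  funext i
  cases i with
  | zero => rfl
  | succ i => show w (i + 1) = w (i + 1); rfl

lemma catW_snoc (a : Word) (x : Bool) (w : Cantor) :
    catW (a ++ [x]) w = catW a (consSeq x w) := by
  funext i
  simp only [catW, List.length_append, List.length_singleton]
  rcases lt_trichotomy i a.length with hlt | heq | hgt
  · rw [dif_pos (by omega), dif_pos hlt]
    simp [List.getElem_append, hlt]
  · subst heq
    rw [dif_pos (by omega), dif_neg (lt_irrefl _)]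
    simp [consSeq, List.getElem_append]
  · rw [dif_neg (by omega), dif_neg (by omega)]
    have hi : i - a.length = (i - (a.length + 1)) + 1 := by omega
    rw [hi]; rfl

lemma dropA_catA {n : ℕ} (α : Addr n) (u : CantorN n) : dropA α (catA α u) = u := by
  funext e
  show dropSeq (α e).length (catW (α e) (u e)) = u e
  exact dropSeq_catW _ _

lemma catA_mem {n : ℕ} (α : Addr n) (u : CantorN n) : catA α u ∈ GammaN α :=
  fun e => ⟨u e, rfl⟩

lemma mem_gammaN_iff {n : ℕ} (α : Addr n) (w : CantorN n) :
    w ∈ GammaN α ↔ catA α (dropA α w) = w := by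
  constructor
  · intro hw
    funext e
    obtain ⟨v, hv⟩ := hw e
    show catW (α e) (dropSeq (α e).length (w e)) = w e
    rw [← hv, dropSeq_catW]
  · intro hw; rw [← hw]; exact catA_mem _ _

lemma prefix_of_catW_eq {a b : Word} {u v : Cantor} (hab : a.length ≤ b.length)
    (hcat : catW a u = catW b v) : a <+: b := by
  rw [List.prefix_iff_eq_take]
  apply List.ext_getElem (by simp [Nat.min_eq_left hab])
  intro i h1 h2
  have hi : i < a.length := h1
  have := congrFun hcat i
  rw [catW_eval_lt _ _ _ hi, catW_eval_lt _ _ _ (lt_of_lt_of_le hi hab)] at this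
  simpa using this

lemma gammaW_disj {a b : Word} (hab : IncompW a b) {w : Cantor} :
    w ∈ GammaW a → w ∈ GammaW b → False := by
  rintro ⟨u, rfl⟩ ⟨v, hv⟩
  rcases le_total a.length b.length with hle | hle
  · exact hab.1 (prefix_of_catW_eq hle hv.symm)
  · exact hab.2 (prefix_of_catW_eq hle hv)

lemma gammaN_disj {n : ℕ} {α β : Addr n} (hab : IncompA α β) {w : CantorN n} :
    w ∈ GammaN α → w ∉ GammaN β := by
  obtain ⟨e, he⟩ := hab
  intro h1 h2
  exact gammaW_disj he (h1 e) (h2 e)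

lemma IncompA.symm {n : ℕ} {α β : Addr n} (hab : IncompA α β) : IncompA β α := by
  obtain ⟨e, he⟩ := hab; exact ⟨e, he.2, he.1⟩

lemma gammaN_app_sub {n : ℕ} {α : Addr n} {e : Fin n} {x : Bool} {w : CantorN n} :
    w ∈ GammaN (appA α e x) → w ∈ GammaN α := by
  intro hw c
  rcases hw c with ⟨v, hv⟩
  by_cases hc : c = e
  · subst hc
    rw [appA, Function.update_self, catW_snoc] at hv
    exact ⟨consSeq x v, hv⟩
  · rw [appA, Function.update_of_ne hc] at hv
    exact ⟨v, hv⟩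

lemma catA_appA {n : ℕ} (α : Addr n) (e : Fin n) (x : Bool) (u : CantorN n) :
    catA (appA α e x) u = catA α (Function.update u e (consSeq x (u e))) := by
  funext c
  show catW (appA α e x c) (u c) = catW (α c) (Function.update u e (consSeq x (u e)) c)
  by_cases hc : c = e
  · subst hc
    rw [appA, Function.update_self, Function.update_self, catW_snoc]
  · rw [appA, Function.update_of_ne hc, Function.update_of_ne hc]

lemma catA_eq_app {n : ℕ} {α : Addr n} {e : Fin n} {u : CantorN n} {x : Bool}
    (hx : u e 0 = x) :
    catA α u = catA (appA α e x) (Function.update u e (dropSeq 1 (u e))) := by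
  have key : Function.update (Function.update u e (dropSeq 1 (u e))) e
      (consSeq x (Function.update u e (dropSeq 1 (u e)) e)) = u := by
    funext c
    by_cases hc : c = e
    · subst hc
      simp only [Function.update_self]
      rw [← hx]
      exact consSeq_head_tail (u c)
    · simp only [Function.update_of_ne hc]
  rw [catA_appA, key]

lemma mem_app_iff {n : ℕ} (α : Addr n) (e : Fin n) (x : Bool) (u : CantorN n) :
    catA α u ∈ GammaN (appA α e x) ↔ u e 0 = x := by
  constructor
  · intro hw
    rcases hw e with ⟨v, hv⟩
    rw [appA, Function.update_self, catW_snoc] at hv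
    have hv' : catW (α e) (consSeq x v) = catW (α e) (u e) := hv
    have h2 := congrFun hv' (α e).length
    rw [catW_head, catW_head] at h2
    exact h2.symm
  · intro hx
    rw [catA_eq_app hx]
    exact catA_mem _ _

lemma swapN_posL {n : ℕ} {γ δ : Addr n} {w : CantorN n} (hw : w ∈ GammaN γ) :
    swapN γ δ w = catA δ (dropA γ w) := by
  simp only [swapN]; rw [if_pos hw]

lemma swapN_posR {n : ℕ} {γ δ : Addr n} {w : CantorN n} (h1 : w ∉ GammaN γ)
    (h2 : w ∈ GammaN δ) : swapN γ δ w = catA γ (dropA δ w) := by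
  simp only [swapN]; rw [if_neg h1, if_pos h2]

lemma swapN_neg {n : ℕ} {γ δ : Addr n} {w : CantorN n} (h1 : w ∉ GammaN γ)
    (h2 : w ∉ GammaN δ) : swapN γ δ w = w := by
  simp only [swapN]; rw [if_neg h1, if_neg h2]

lemma bakerFull_at_d {n : ℕ} [NeZero n] {d : Fin n} (hd : d ≠ 0) (u : CantorN n) :
    bakerFull d u d = consSeq (u 0 0) (u d) := by
  simp [bakerFull, hd]

lemma invBakerFull_at_0 {n : ℕ} [NeZero n] (d : Fin n) (u : CantorN n) :
    invBakerFull d u 0 = consSeq (u d 0) (u 0) := by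
  simp [invBakerFull]

/-- The key computation for a point in `Γ(α)` whose active bit is `x`. -/
lemma update_eq_bakerFull {n : ℕ} [NeZero n] {d : Fin n} (hd : d ≠ 0)
    (u : CantorN n) {x : Bool} (hx : u 0 0 = x) :
    Function.update (Function.update u 0 (dropSeq 1 (u 0))) d
      (consSeq x ((Function.update u 0 (dropSeq 1 (u 0))) d)) = bakerFull d u := by
  funext e
  by_cases hed : e = d
  · subst hed
    rw [Function.update_self, bakerFull_at_d hd, Function.update_of_ne hd, ← hx]
  · rw [Function.update_of_ne hed]
    by_cases he0 : e = 0
    · subst he0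
      rw [Function.update_self]
      simp [bakerFull]
    · rw [Function.update_of_ne he0]
      simp [bakerFull, he0, hed]

/-- The key computation for a point in `Γ(β)` whose active bit is `y`. -/
lemma update_eq_invBakerFull {n : ℕ} [NeZero n] {d : Fin n} (hd : d ≠ 0)
    (u : CantorN n) {y : Bool} (hy : u d 0 = y) :
    Function.update (Function.update u d (dropSeq 1 (u d))) 0
      (consSeq y ((Function.update u d (dropSeq 1 (u d))) 0)) = invBakerFull d u := by
  funext e
  by_cases he0 : e = 0
  · subst he0
    rw [Function.update_self, invBakerFull_at_0, Function.update_of_ne (Ne.symm hd), ← hy]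
  · rw [Function.update_of_ne he0]
    by_cases hed : e = d
    · subst hed
      rw [Function.update_self]
      simp [invBakerFull, he0]
    · rw [Function.update_of_ne hed]
      simp [invBakerFull, he0, hed]

/-- The product of transpositions ⟨α.0₁, β.0_d⟩ ⟨α.1₁, β.1_d⟩ ⟨α, β⟩
(applied in this order) equals the composite of the index-d baker's map
supported on Γ(α) with the inverse of the index-d baker's map supported on
Γ(β). -/
theorem stmt9 (n : ℕ) [NeZero n] (hn : 2 ≤ n) (d : Fin n) (hd : d ≠ 0)
    (α β : Addr n) (h : IncompA α β) :
    swapN α β ∘ swapN (appA α 0 true) (appA β d true) ∘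
        swapN (appA α 0 false) (appA β d false) =
      invBakerN d β ∘ bakerN d α := by
  funext w
  simp only [Function.comp_apply]
  by_cases hα : w ∈ GammaN α
  · -- `w ∈ Γ(α)`
    have hβ : w ∉ GammaN β := gammaN_disj h hα
    have hw : catA α (dropA α w) = w := (mem_gammaN_iff α w).mp hα
    set u := dropA α w with hu
    have hp : catA α (bakerFull d u) ∉ GammaN β := gammaN_disj h (catA_mem _ _)
    have hRHS : invBakerN d β (bakerN d α w) = catA α (bakerFull d u) := by
      simp only [bakerN, invBakerN]
      simp only [if_pos hα, ← hu, if_neg hp]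
    rw [hRHS]
    have hq : catA β (bakerFull d u) ∈ GammaN β := catA_mem _ _
    have hqα : catA β (bakerFull d u) ∉ GammaN α := gammaN_disj h.symm hq
    have hswap_act : ∀ x : Bool, u 0 0 = x →
        swapN (appA α 0 x) (appA β d x) w = catA β (bakerFull d u) := by
      intro x hx
      have hw' : w = catA (appA α 0 x) (Function.update u 0 (dropSeq 1 (u 0))) := by
        rw [← hw]; exact catA_eq_app hx
      rw [hw', swapN_posL (catA_mem _ _), dropA_catA, catA_appA,
        update_eq_bakerFull hd u hx]
    have hswap_fix_w : ∀ x : Bool, u 0 0 ≠ x →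
        swapN (appA α 0 x) (appA β d x) w = w := by
      intro x hx
      apply swapN_neg
      · intro hh; rw [← hw] at hh; exact hx ((mem_app_iff α 0 x u).mp hh)
      · intro hh; exact hβ (gammaN_app_sub hh)
    have hswap_fix_p : ∀ x : Bool, u 0 0 ≠ x →
        swapN (appA α 0 x) (appA β d x) (catA β (bakerFull d u)) =
          catA β (bakerFull d u) := by
      intro x hx
      apply swapN_neg
      · intro hh; exact hqα (gammaN_app_sub hh)
      · intro hh
        apply hx
        have h3 := (mem_app_iff β d x _).mp hh
        rw [bakerFull_at_d hd] at h3
        exact h3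
    have hfinal : swapN α β (catA β (bakerFull d u)) = catA α (bakerFull d u) := by
      rw [swapN_posR hqα hq, dropA_catA]
    cases hxx : u 0 0 with
    | false =>
        rw [hswap_act false hxx, hswap_fix_p true (by simp [hxx]), hfinal]
    | true =>
        rw [hswap_fix_w false (by simp [hxx]), hswap_act true hxx, hfinal]
  · by_cases hβ : w ∈ GammaN β
    · -- `w ∈ Γ(β)`
      have hw : catA β (dropA β w) = w := (mem_gammaN_iff β w).mp hβ
      set u := dropA β w with hu
      have hRHS : invBakerN d β (bakerN d α w) = catA β (invBakerFull d u) := by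
        simp only [bakerN, invBakerN]
        simp only [if_neg hα, if_pos hβ, ← hu]
      rw [hRHS]
      have hq : catA α (invBakerFull d u) ∈ GammaN α := catA_mem _ _
      have hqβ : catA α (invBakerFull d u) ∉ GammaN β := gammaN_disj h hq
      have hswap_act : ∀ y : Bool, u d 0 = y →
          swapN (appA α 0 y) (appA β d y) w = catA α (invBakerFull d u) := by
        intro y hy
        have hw' : w = catA (appA β d y) (Function.update u d (dropSeq 1 (u d))) := by
          rw [← hw]; exact catA_eq_app hy
        have hnot : w ∉ GammaN (appA α 0 y) := fun hh => hα (gammaN_app_sub hh)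
        rw [hw', swapN_posR (hw' ▸ hnot) (catA_mem _ _), dropA_catA, catA_appA,
          update_eq_invBakerFull hd u hy]
      have hswap_fix_w : ∀ y : Bool, u d 0 ≠ y →
          swapN (appA α 0 y) (appA β d y) w = w := by
        intro y hy
        apply swapN_neg
        · intro hh; exact hα (gammaN_app_sub hh)
        · intro hh; rw [← hw] at hh; exact hy ((mem_app_iff β d y u).mp hh)
      have hswap_fix_q : ∀ y : Bool, u d 0 ≠ y →
          swapN (appA α 0 y) (appA β d y) (catA α (invBakerFull d u)) =
            catA α (invBakerFull d u) := by
        intro y hy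
        apply swapN_neg
        · intro hh
          apply hy
          have h3 := (mem_app_iff α 0 y _).mp hh
          rw [invBakerFull_at_0] at h3
          exact h3
        · intro hh; exact hqβ (gammaN_app_sub hh)
      have hfinal : swapN α β (catA α (invBakerFull d u)) =
          catA β (invBakerFull d u) := by
        rw [swapN_posL hq, dropA_catA]
      cases hyy : u d 0 with
      | false =>
          rw [hswap_act false hyy, hswap_fix_q true (by simp [hyy]), hfinal]
      | true =>
          rw [hswap_fix_w false (by simp [hyy]), hswap_act true hyy, hfinal]
    · -- `w` outside both supports
      have f1 : ∀ x : Bool, swapN (appA α 0 x) (appA β d x) w = w := by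
        intro x
        exact swapN_neg (fun hh => hα (gammaN_app_sub hh))
          (fun hh => hβ (gammaN_app_sub hh))
      rw [f1 false, f1 true, swapN_neg hα hβ]
      simp only [bakerN, invBakerN]
      simp only [if_neg hα, if_neg hβ]
end

section
/- For any address α with nonempty first coordinate and distinct indices d, d' with 2 ≤ d, d' ≤ n and d ≠ d', the baker's map satisfies B_d(α) = B_d(α.0_{d'}) ∘ B_d(α.1_{d'}) as homeomorphisms of 𝔠ⁿ. -/
open scoped Classical

lemma mem_GammaW_iff (u : Word) (w : Cantor) :
    w ∈ GammaW u ↔ ∀ i (h : i < u.length), w i = u.get ⟨i, h⟩ := by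
  constructor
  · rintro ⟨v, rfl⟩ i h
    simp [catW, h]
  · intro h
    refine ⟨dropSeq u.length w, ?_⟩
    funext i
    simp only [catW, dropSeq]
    split
    · exact (h i ‹_›).symm
    · congr 1; omega

lemma catW_dropSeq {u : Word} {w : Cantor} (h : w ∈ GammaW u) :
    catW u (dropSeq u.length w) = w := by
  rw [mem_GammaW_iff] at h
  funext i
  simp only [catW, dropSeq]
  split
  · exact (h i ‹_›).symm
  · congr 1; omega

lemma mem_GammaW_concat (u : Word) (x : Bool) (w : Cantor) :
    w ∈ GammaW (u ++ [x]) ↔ w ∈ GammaW u ∧ w u.length = x := by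
  simp only [mem_GammaW_iff, List.length_append, List.length_singleton,
    List.get_eq_getElem]
  constructor
  · intro h
    refine ⟨fun i hi => ?_, ?_⟩
    · rw [h i (by omega)]
      exact List.getElem_append_left hi
    · rw [h u.length (by omega)]
      exact List.getElem_concat_length rfl _
  · rintro ⟨h1, h2⟩ i hi
    rcases Nat.lt_or_ge i u.length with hlt | hge
    · rw [h1 i hlt]
      exact (List.getElem_append_left hlt).symm
    · have : i = u.length := by omega
      subst this
      rw [h2]
      exact (List.getElem_concat_length rfl _).symm

lemma appA_apply_ne {n : ℕ} (α : Addr n) (d' e : Fin n) (x : Bool)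
    (h : e ≠ d') : appA α d' x e = α e := Function.update_of_ne h _ _

lemma appA_apply_self {n : ℕ} (α : Addr n) (d' : Fin n) (x : Bool) :
    appA α d' x d' = α d' ++ [x] := Function.update_self _ _ _

lemma mem_GammaN_appA {n : ℕ} (α : Addr n) (d' : Fin n) (x : Bool)
    (w : CantorN n) :
    w ∈ GammaN (appA α d' x) ↔ w ∈ GammaN α ∧ w d' ((α d').length) = x := by
  constructor
  · intro h
    have hd' := h d'
    rw [appA_apply_self, mem_GammaW_concat] at hd'
    refine ⟨fun e => ?_, hd'.2⟩
    by_cases he : e = d'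
    · subst he; exact hd'.1
    · have := h e; rwa [appA_apply_ne _ _ _ _ he] at this
  · rintro ⟨h1, h2⟩ e
    by_cases he : e = d'
    · subst he; rw [appA_apply_self, mem_GammaW_concat]; exact ⟨h1 _, h2⟩
    · rw [appA_apply_ne _ _ _ _ he]; exact h1 e

lemma bakerFull_apply_ne {n : ℕ} [NeZero n] (d e : Fin n) (u : CantorN n)
    (h0 : e ≠ 0) (hd : e ≠ d) : bakerFull d u e = u e := by
  simp [bakerFull, h0, hd]

lemma bakerFull_agree {n : ℕ} [NeZero n] (d e : Fin n) (u v : CantorN n)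
    (h0 : u 0 = v 0) (hd : u d = v d) (he : u e = v e) :
    bakerFull d u e = bakerFull d v e := by
  unfold bakerFull
  split_ifs with h1 h2
  · rw [h0]
  · rw [h0, hd]
  · exact he

lemma key_baker {n : ℕ} [NeZero n] (d d' : Fin n) (hd'0 : d' ≠ 0)
    (hdd' : d ≠ d') (α : Addr n) (x : Bool) (w : CantorN n)
    (hw : w ∈ GammaN (appA α d' x)) :
    catA (appA α d' x) (bakerFull d (dropA (appA α d' x) w)) =
      catA α (bakerFull d (dropA α w)) := by
  have hwα : w ∈ GammaN α := ((mem_GammaN_appA α d' x w).1 hw).1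
  funext e
  by_cases he : e = d'
  · subst he
    show catW (appA α e x e) _ = catW (α e) _
    rw [bakerFull_apply_ne _ _ _ hd'0 (Ne.symm hdd'),
      bakerFull_apply_ne _ _ _ hd'0 (Ne.symm hdd')]
    have h1 : w e ∈ GammaW (appA α e x e) := hw e
    have h2 : w e ∈ GammaW (α e) := hwα e
    show catW (appA α e x e)
        (dropSeq ((appA α e x e).length) (w e)) =
      catW (α e) (dropSeq ((α e).length) (w e))
    rw [catW_dropSeq h1, catW_dropSeq h2]
  · show catW (appA α d' x e) _ = catW (α e) _
    rw [appA_apply_ne _ _ _ _ he]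
    have heq : bakerFull d (dropA (appA α d' x) w) e
        = bakerFull d (dropA α w) e := by
      apply bakerFull_agree
      · show dropSeq ((appA α d' x 0).length) (w 0) = _
        rw [appA_apply_ne _ _ _ _ (Ne.symm hd'0)]; rfl
      · show dropSeq ((appA α d' x d).length) (w d) = _
        rw [appA_apply_ne _ _ _ _ hdd']; rfl
      · show dropSeq ((appA α d' x e).length) (w e) = _
        rw [appA_apply_ne _ _ _ _ he]; rfl
    rw [heq]

lemma catA_coord_d' {n : ℕ} [NeZero n] (d d' : Fin n) (hd'0 : d' ≠ 0)
    (hdd' : d ≠ d') (α : Addr n) (w : CantorN n) (hw : w ∈ GammaN α) :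
    catA α (bakerFull d (dropA α w)) d' = w d' := by
  show catW (α d') (bakerFull d (dropA α w) d') = w d'
  rw [bakerFull_apply_ne _ _ _ hd'0 (Ne.symm hdd')]
  exact catW_dropSeq (hw d')

/-- The split formula for baker's maps in a coordinate d' ∉ {1, d}:
`B_d(α) = B_d(α.0_{d'}) ∘ B_d(α.1_{d'})`. -/
theorem stmt11 (n : ℕ) [NeZero n] (hn : 2 ≤ n) (d d' : Fin n)
    (hd : d ≠ 0) (hd' : d' ≠ 0) (hdd' : d ≠ d')
    (α : Addr n) (hα : α 0 ≠ ([] : Word)) :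
    bakerN d α = bakerN d (appA α d' false) ∘ bakerN d (appA α d' true) := by
  funext w
  simp only [Function.comp_apply]
  by_cases hw : w ∈ GammaN α
  · by_cases hb : w d' ((α d').length) = true
    · -- w is in Γ(α.1_{d'}): the inner map acts, the outer map fixes.
      have hw1 : w ∈ GammaN (appA α d' true) :=
        (mem_GammaN_appA α d' true w).2 ⟨hw, hb⟩
      unfold bakerN
      rw [if_pos hw, if_pos hw1, key_baker d d' hd' hdd' α true w hw1]
      rw [if_neg ?_]
      intro hmem
      have h0 := ((mem_GammaN_appA α d' false _).1 hmem).2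
      rw [catA_coord_d' d d' hd' hdd' α w hw] at h0
      rw [hb] at h0
      exact Bool.noConfusion h0
    · -- w is in Γ(α.0_{d'}): the inner map fixes, the outer map acts.
      have hb' : w d' ((α d').length) = false := by
        cases h : w d' ((α d').length)
        · rfl
        · exact absurd h hb
      have hw0 : w ∈ GammaN (appA α d' false) :=
        (mem_GammaN_appA α d' false w).2 ⟨hw, hb'⟩
      have hw1 : w ∉ GammaN (appA α d' true) := by
        intro hmem
        have := ((mem_GammaN_appA α d' true w).1 hmem).2
        rw [hb'] at this
        exact Bool.noConfusion this
      unfold bakerN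
      rw [if_pos hw, if_neg hw1, if_pos hw0,
        key_baker d d' hd' hdd' α false w hw0]
  · -- w is outside Γ(α): everything fixes w.
    have hw1 : w ∉ GammaN (appA α d' true) := fun hmem =>
      hw ((mem_GammaN_appA α d' true w).1 hmem).1
    have hw0 : w ∉ GammaN (appA α d' false) := fun hmem =>
      hw ((mem_GammaN_appA α d' false w).1 hmem).1
    unfold bakerN
    rw [if_neg hw, if_neg hw1, if_neg hw0]
end

section
/- Let C_d and C_{d'} be the full-support baker's maps of 𝔠ⁿ for distinct indices 2 ≤ d, d' ≤ n. Then the conjugate of the partially-supported baker's map satisfies C_{d'}⁻¹ ∘ B_d(0₁) ∘ C_{d'} = B_d(0_{d'}), where B_d(0_{d'}) is the index-d baker's map supported on the set of points whose d'-th coordinate begins with 0. Similarly C_{d'}⁻¹ ∘ B_d(1₁) ∘ C_{d'} = B_d(1_{d'}). -/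
/-!
Conjugating by `C_{d'}` only relocates the leading letter `x` between coordinate `1` and
coordinate `d'`. Thus `C_{d'}⁻¹ w ∈ Γ(x₁)` exactly when `w ∈ Γ(x_{d'})`, stripping the prefix
`x₁` from `C_{d'}⁻¹ w` leaves the same point as stripping `x_{d'}` from `w`, and `C_{d'}` turns
the prefix `x₁` back into `x_{d'}`. So the two maps agree on the support, and off it both
reduce to `C_{d'} ∘ C_{d'}⁻¹ = id`.
-/

open scoped Classical

lemma catW_nil (u : Cantor) : catW [] u = u := by
  funext i; simp [catW]

lemma catW_singleton (x : Bool) (u : Cantor) : catW [x] u = consSeq x u := by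
  funext i; cases i <;> simp [catW, consSeq]

lemma dropSeq_zero (u : Cantor) : dropSeq 0 u = u := rfl

lemma dropSeq_one_consSeq (b : Bool) (u : Cantor) : dropSeq 1 (consSeq b u) = u := rfl

lemma consSeq_dropSeq_one (u : Cantor) : consSeq (u 0) (dropSeq 1 u) = u := by
  funext i; cases i <;> rfl

lemma mem_GammaW_nil (w : Cantor) : w ∈ GammaW [] := ⟨w, catW_nil w⟩

lemma mem_GammaW_singleton {w : Cantor} {x : Bool} : w ∈ GammaW [x] ↔ w 0 = x := by
  constructor
  · rintro ⟨u, rfl⟩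
    rw [catW_singleton]; rfl
  · rintro rfl
    exact ⟨dropSeq 1 w, by rw [catW_singleton, consSeq_dropSeq_one]⟩

section UnitAddress

variable {n : ℕ}

lemma mem_GammaN_unitA_singleton {e : Fin n} {x : Bool} {w : CantorN n} :
    w ∈ GammaN (unitA e [x]) ↔ w e 0 = x := by
  refine ⟨fun h => by simpa [unitA, mem_GammaW_singleton] using h e, fun h c => ?_⟩
  by_cases hc : c = e
  · subst hc; simpa [unitA, mem_GammaW_singleton] using h
  · simpa [unitA, hc] using mem_GammaW_nil (w c)

lemma catA_unitA_singleton (e : Fin n) (x : Bool) (u : CantorN n) (c : Fin n) :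
    catA (unitA e [x]) u c = if c = e then consSeq x (u c) else u c := by
  by_cases h : c = e <;> simp [catA, unitA, h, catW_singleton, catW_nil]

lemma dropA_unitA_singleton (e : Fin n) (x : Bool) (w : CantorN n) (c : Fin n) :
    dropA (unitA e [x]) w c = if c = e then dropSeq 1 (w c) else w c := by
  by_cases h : c = e <;> simp [dropA, unitA, h, dropSeq_zero]

end UnitAddress

section FullBaker

variable {n : ℕ} [NeZero n] {d : Fin n}

lemma bakerFull_invBakerFull (hd : d ≠ 0) (w : CantorN n) :
    bakerFull d (invBakerFull d w) = w := by
  funext c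
  by_cases hc0 : c = 0
  · subst hc0
    simp [bakerFull, invBakerFull, dropSeq_one_consSeq]
  by_cases hcd : c = d
  · subst hcd
    simp [bakerFull, invBakerFull, hc0, consSeq, consSeq_dropSeq_one]
  · simp [bakerFull, invBakerFull, hc0, hcd]

lemma invBakerFull_mem_GammaN_unitA_zero_iff (x : Bool) (w : CantorN n) :
    invBakerFull d w ∈ GammaN (unitA 0 [x]) ↔ w ∈ GammaN (unitA d [x]) := by
  simp only [mem_GammaN_unitA_singleton, invBakerFull]
  rfl

lemma dropA_unitA_zero_invBakerFull (hd : d ≠ 0) (x y : Bool) (w : CantorN n) :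
    dropA (unitA 0 [x]) (invBakerFull d w) = dropA (unitA d [y]) w := by
  funext c
  by_cases hc0 : c = 0
  · subst hc0
    simp [dropA_unitA_singleton, invBakerFull, Ne.symm hd, dropSeq_one_consSeq]
  by_cases hcd : c = d
  · subst hcd
    simp [dropA_unitA_singleton, invBakerFull, hc0]
  · simp [dropA_unitA_singleton, invBakerFull, hc0, hcd]

lemma bakerFull_catA_unitA_zero (hd : d ≠ 0) (x : Bool) (u : CantorN n) :
    bakerFull d (catA (unitA 0 [x]) u) = catA (unitA d [x]) u := by
  funext c
  by_cases hc0 : c = 0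
  · subst hc0
    simp [bakerFull, catA_unitA_singleton, Ne.symm hd, dropSeq_one_consSeq]
  by_cases hcd : c = d
  · subst hcd
    simp [bakerFull, catA_unitA_singleton, hc0, consSeq]
  · simp [bakerFull, catA_unitA_singleton, hc0, hcd]

theorem bakerFull_comp_bakerN_unitA_zero_comp_invBakerFull {d' : Fin n} (hd' : d' ≠ 0)
    (x : Bool) :
    bakerFull d' ∘ bakerN d (unitA 0 [x]) ∘ invBakerFull d' = bakerN d (unitA d' [x]) := by
  funext w
  by_cases hw : w ∈ GammaN (unitA d' [x])
  · have hw' := (invBakerFull_mem_GammaN_unitA_zero_iff x w).mpr hw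
    simp only [Function.comp_apply, bakerN, if_pos hw, if_pos hw',
      dropA_unitA_zero_invBakerFull hd' x x, bakerFull_catA_unitA_zero hd']
  · have hw' := mt (invBakerFull_mem_GammaN_unitA_zero_iff x w).mp hw
    simp only [Function.comp_apply, bakerN, if_neg hw, if_neg hw',
      bakerFull_invBakerFull hd']

end FullBaker

/-- In the paper's right-action convention this reads `C_{d'}⁻¹ ∘ B_d(x₁) ∘ C_{d'} = B_d(x_{d'})`. -/
theorem stmt15_general (n : ℕ) [NeZero n] (d d' : Fin n) (hd' : d' ≠ 0) :
    bakerFull d' ∘ bakerN d (unitA 0 [false]) ∘ invBakerFull d' =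
        bakerN d (unitA d' [false]) ∧
    bakerFull d' ∘ bakerN d (unitA 0 [true]) ∘ invBakerFull d' =
        bakerN d (unitA d' [true]) :=
  ⟨bakerFull_comp_bakerN_unitA_zero_comp_invBakerFull hd' false,
    bakerFull_comp_bakerN_unitA_zero_comp_invBakerFull hd' true⟩

/-- Conjugating the baker's map B_d(x₁) by the full-support baker's map
C_{d'} (in the right-action convention, so as a function this conjugate is
`C_{d'} ∘ B_d(x₁) ∘ C_{d'}⁻¹`) gives the baker's map B_d(x_{d'}). -/
theorem stmt15 (n : ℕ) [NeZero n] (hn : 2 ≤ n) (d d' : Fin n)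
    (hd : d ≠ 0) (hd' : d' ≠ 0) (hdd' : d ≠ d') :
    bakerFull d' ∘ bakerN d (unitA 0 [false]) ∘ invBakerFull d' =
        bakerN d (unitA d' [false]) ∧
    bakerFull d' ∘ bakerN d (unitA 0 [true]) ∘ invBakerFull d' =
        bakerN d (unitA d' [true]) :=
  stmt15_general n d d' hd'
end
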